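/- arXiv:2402.09261 — 2 statements merged into one kernel-verified Lean document; each statement's English description precedes it below -/
import Mathlib

section
/- Let X be a complex Banach space and let T ∈ L(X) be a left semi-Fredholm operator. Then T is a quasi-Fredholm operator. -/
noncomputable section

/-- The two-sided ideal `F₀(X)` of finite-rank operators in `L(X)`. -/
def finiteRankIdeal (X : Type*) [NormedAddCommGroup X] [NormedSpace ℂ X] :
    TwoSidedIdeal (X →L[ℂ] X) :=
  TwoSidedIdeal.mk'
    {F : X →L[ℂ] X | FiniteDimensional ℂ (LinearMap.range (F : X →ₗ[ℂ] X))}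
    (by
      show FiniteDimensional ℂ (LinearMap.range ((0 : X →L[ℂ] X) : X →ₗ[ℂ] X))
      rw [show LinearMap.range ((0 : X →L[ℂ] X) : X →ₗ[ℂ] X) = ⊥ by ext x; simp [eq_comm]]
      infer_instance)
    (by
      intro x y hx hy
      haveI : FiniteDimensional ℂ (LinearMap.range (x : X →ₗ[ℂ] X)) := hx
      haveI : FiniteDimensional ℂ (LinearMap.range (y : X →ₗ[ℂ] X)) := hy
      have hle : LinearMap.range ((x + y : X →L[ℂ] X) : X →ₗ[ℂ] X) ≤ LinearMap.range (x : X →ₗ[ℂ] X) ⊔ LinearMap.range (y : X →ₗ[ℂ] X) := by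
        rintro z ⟨w, rfl⟩
        exact Submodule.add_mem_sup (LinearMap.mem_range_self (x : X →ₗ[ℂ] X) w) (LinearMap.mem_range_self (y : X →ₗ[ℂ] X) w)
      exact Submodule.finiteDimensional_of_le hle)
    (by
      intro x hx
      haveI : FiniteDimensional ℂ (LinearMap.range (x : X →ₗ[ℂ] X)) := hx
      have hle : LinearMap.range ((-x : X →L[ℂ] X) : X →ₗ[ℂ] X) ≤ LinearMap.range (x : X →ₗ[ℂ] X) := by
        rintro z ⟨w, rfl⟩; exact ⟨-w, by simp⟩
      exact Submodule.finiteDimensional_of_le hle)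
    (by
      intro x y hy
      haveI : FiniteDimensional ℂ (LinearMap.range (y : X →ₗ[ℂ] X)) := hy
      haveI : FiniteDimensional ℂ (Submodule.map (x : X →ₗ[ℂ] X) (LinearMap.range (y : X →ₗ[ℂ] X))) :=
        Module.Finite.map _ _
      have hle : LinearMap.range ((x * y : X →L[ℂ] X) : X →ₗ[ℂ] X) ≤ Submodule.map (x : X →ₗ[ℂ] X) (LinearMap.range (y : X →ₗ[ℂ] X)) := by
        rintro z ⟨w, rfl⟩; exact ⟨y w, LinearMap.mem_range_self (y : X →ₗ[ℂ] X) w, rfl⟩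
      exact Submodule.finiteDimensional_of_le hle)
    (by
      intro x y hx
      haveI : FiniteDimensional ℂ (LinearMap.range (x : X →ₗ[ℂ] X)) := hx
      have hle : LinearMap.range ((x * y : X →L[ℂ] X) : X →ₗ[ℂ] X) ≤ LinearMap.range (x : X →ₗ[ℂ] X) := by
        rintro z ⟨w, rfl⟩; exact ⟨y w, rfl⟩
      exact Submodule.finiteDimensional_of_le hle)

/-- Restriction of a bounded operator to an invariant subspace, as a bounded
operator on that subspace. -/
def clmRestrict {X : Type*} [NormedAddCommGroup X] [NormedSpace ℂ X]
    (T : X →L[ℂ] X) (M : Submodule ℂ X) (h : ∀ x ∈ M, T x ∈ M) : M →L[ℂ] M where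
  toLinearMap := (T : X →ₗ[ℂ] X).restrict h
  cont := by
    show Continuous fun x : M => (⟨T x, h x x.2⟩ : M)
    exact Continuous.subtype_mk (T.continuous.comp continuous_subtype_val) _

/-- The set `Δ(T)` of stable iteration indices:
`Δ(T) = {n : ∀ m ≥ n, N(T) ∩ R(T^n) ⊆ N(T) ∩ R(T^m)}`. -/
def disSet {X : Type*} [NormedAddCommGroup X] [NormedSpace ℂ X] (T : X →L[ℂ] X) : Set ℕ :=
  {n | ∀ m, n ≤ m →
    (LinearMap.ker (T : X →ₗ[ℂ] X) ⊓ LinearMap.range ((T ^ n : X →L[ℂ] X) : X →ₗ[ℂ] X) : Submodule ℂ X) ≤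
      LinearMap.ker (T : X →ₗ[ℂ] X) ⊓ LinearMap.range ((T ^ m : X →L[ℂ] X) : X →ₗ[ℂ] X)}

/-- `T` is quasi-Fredholm of degree `d` : `dis(T) = d` (i.e. `d` is the least element of
`Δ(T)`), `N(T) ∩ R(T^d)` is a closed complemented subspace of `X`, and `R(T) + N(T^d)` is a
closed complemented subspace of `X`. -/
def IsQuasiFredholmOfDegree {X : Type*} [NormedAddCommGroup X] [NormedSpace ℂ X]
    (T : X →L[ℂ] X) (d : ℕ) : Prop :=
  IsLeast (disSet T) d ∧
    IsClosed ((LinearMap.ker (T : X →ₗ[ℂ] X) ⊓ LinearMap.range ((T ^ d : X →L[ℂ] X) : X →ₗ[ℂ] X) : Submodule ℂ X) : Set X) ∧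
    (LinearMap.ker (T : X →ₗ[ℂ] X) ⊓ LinearMap.range ((T ^ d : X →L[ℂ] X) : X →ₗ[ℂ] X)).ClosedComplemented ∧
    IsClosed ((LinearMap.range (T : X →ₗ[ℂ] X) ⊔ LinearMap.ker ((T ^ d : X →L[ℂ] X) : X →ₗ[ℂ] X) : Submodule ℂ X) : Set X) ∧
    (LinearMap.range (T : X →ₗ[ℂ] X) ⊔ LinearMap.ker ((T ^ d : X →L[ℂ] X) : X →ₗ[ℂ] X)).ClosedComplemented

/-- `T` is quasi-Fredholm if it is quasi-Fredholm of some degree `d`. -/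
def IsQuasiFredholm {X : Type*} [NormedAddCommGroup X] [NormedSpace ℂ X]
    (T : X →L[ℂ] X) : Prop :=
  ∃ d : ℕ, IsQuasiFredholmOfDegree T d

/-- Left semi-Fredholm: closed range, finite-dimensional kernel, and range complemented
(i.e. the range of a bounded projection). -/
def IsLeftSemiFredholm {Y : Type*} [NormedAddCommGroup Y] [NormedSpace ℂ Y]
    (S : Y →L[ℂ] Y) : Prop :=
  IsClosed ((LinearMap.range (S : Y →ₗ[ℂ] Y) : Submodule ℂ Y) : Set Y) ∧
    FiniteDimensional ℂ (LinearMap.ker (S : Y →ₗ[ℂ] Y)) ∧ (LinearMap.range (S : Y →ₗ[ℂ] Y)).ClosedComplemented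

/-- Right semi-Fredholm: closed range of finite codimension, and kernel complemented
(i.e. the range of a bounded projection). -/
def IsRightSemiFredholm {Y : Type*} [NormedAddCommGroup Y] [NormedSpace ℂ Y]
    (S : Y →L[ℂ] Y) : Prop :=
  IsClosed ((LinearMap.range (S : Y →ₗ[ℂ] Y) : Submodule ℂ Y) : Set Y) ∧
    FiniteDimensional ℂ (Y ⧸ LinearMap.range (S : Y →ₗ[ℂ] Y)) ∧ (LinearMap.ker (S : Y →ₗ[ℂ] Y)).ClosedComplemented

/-- Fredholm: closed range, finite-dimensional kernel, range of finite codimension. -/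
def IsFredholmOp {Y : Type*} [NormedAddCommGroup Y] [NormedSpace ℂ Y]
    (S : Y →L[ℂ] Y) : Prop :=
  IsClosed ((LinearMap.range (S : Y →ₗ[ℂ] Y) : Submodule ℂ Y) : Set Y) ∧
    FiniteDimensional ℂ (LinearMap.ker (S : Y →ₗ[ℂ] Y)) ∧ FiniteDimensional ℂ (Y ⧸ LinearMap.range (S : Y →ₗ[ℂ] Y))

/-- Regular operator: kernel and range are complemented (closed) subspaces. -/
def IsRegularOp {Y : Type*} [NormedAddCommGroup Y] [NormedSpace ℂ Y]
    (S : Y →L[ℂ] Y) : Prop :=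
  (LinearMap.ker (S : Y →ₗ[ℂ] Y)).ClosedComplemented ∧ (LinearMap.range (S : Y →ₗ[ℂ] Y)).ClosedComplemented

lemma range_pow_invariant {X : Type*} [NormedAddCommGroup X] [NormedSpace ℂ X]
    (T : X →L[ℂ] X) (n : ℕ) :
    ∀ x ∈ LinearMap.range ((T ^ n : X →L[ℂ] X) : X →ₗ[ℂ] X), T x ∈ LinearMap.range ((T ^ n : X →L[ℂ] X) : X →ₗ[ℂ] X) := by
  rintro x ⟨y, rfl⟩
  exact ⟨T y, by
    simp only [ContinuousLinearMap.coe_coe]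
    rw [← ContinuousLinearMap.mul_apply, ← ContinuousLinearMap.mul_apply, ← pow_succ,
      ← pow_succ']⟩

/-- B-Fredholm: for some `n`, `R(T^n)` is closed and the restriction of `T` to `R(T^n)`,
viewed as an operator from `R(T^n)` to `R(T^n)`, is a Fredholm operator. -/
def IsBFredholm {X : Type*} [NormedAddCommGroup X] [NormedSpace ℂ X]
    (T : X →L[ℂ] X) : Prop :=
  ∃ n : ℕ, IsClosed ((LinearMap.range ((T ^ n : X →L[ℂ] X) : X →ₗ[ℂ] X) : Submodule ℂ X) : Set X) ∧
    IsFredholmOp (clmRestrict T (LinearMap.range ((T ^ n : X →L[ℂ] X) : X →ₗ[ℂ] X)) (range_pow_invariant T n))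

/-- Left Drazin invertible element of a unital ring: there is an idempotent `p`
commuting with `a` such that `a * p` is nilpotent and `a + p` has a left inverse
commuting with `p`. -/
def IsLeftDrazinInvertible {A : Type*} [Ring A] (a : A) : Prop :=
  ∃ p : A, IsIdempotentElem p ∧ a * p = p * a ∧ IsNilpotent (a * p) ∧
    ∃ b : A, b * (a + p) = 1 ∧ b * p = p * b

/-- Right Drazin invertible element of a unital ring: there is an idempotent `p`
commuting with `a` such that `a * p` is nilpotent and `a + p` has a right inverse
commuting with `p`. -/
def IsRightDrazinInvertible {A : Type*} [Ring A] (a : A) : Prop :=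
  ∃ p : A, IsIdempotentElem p ∧ a * p = p * a ∧ IsNilpotent (a * p) ∧
    ∃ b : A, (a + p) * b = 1 ∧ b * p = p * b

/-- Drazin invertible element of a unital ring: there is an idempotent `p`
commuting with `a` such that `a * p` is nilpotent and `a + p` is invertible. -/
def IsDrazinInvertible {A : Type*} [Ring A] (a : A) : Prop :=
  ∃ p : A, IsIdempotentElem p ∧ a * p = p * a ∧ IsNilpotent (a * p) ∧ IsUnit (a + p)

end

/-!
Since `N(T)` is finite-dimensional, the decreasing chain `N(T) ∩ R(T^n)` stabilises, so `dis(T)`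
is finite, and `N(T) ∩ R(T^d)` is finite-dimensional, hence closed and complemented. Moreover
`N(T^d)` is finite-dimensional, and adding a finite-dimensional subspace `F` to a complemented
subspace `M` keeps it complemented: projecting `F` along `M` onto a closed complement `C` of `M`
gives a finite-dimensional `F' ≤ C` with `M + F = M ⊕ F'`, and `F'` is complemented by Hahn–Banach.
-/

open Submodule LinearMap

theorem Submodule.exists_forall_ge_eq_of_antitone {K V : Type*} [DivisionRing K] [AddCommGroup V]
    [Module K V] {p : ℕ → Submodule K V} (hp : Antitone p) [FiniteDimensional K (p 0)] :
    ∃ n, ∀ m, n ≤ m → p m = p n := by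
  have (n : ℕ) : FiniteDimensional K (p n) := finiteDimensional_of_le (hp n.zero_le)
  obtain ⟨n, hn⟩ := WellFoundedLT.antitone_chain_condition
    (f := fun n => Module.finrank K (p n)) fun _ _ h => finrank_mono (hp h)
  exact ⟨n, fun m hm => eq_of_le_of_finrank_eq (hp hm) (hn m hm).symm⟩

theorem LinearMap.finiteDimensional_ker_pow {K V : Type*} [DivisionRing K] [AddCommGroup V]
    [Module K V] (f : Module.End K V) [FiniteDimensional K (ker f)] (n : ℕ) :
    FiniteDimensional K (ker (f ^ n)) := by
  induction n with
  | zero => rw [pow_zero, Module.End.one_eq_id, ker_id]; infer_instance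
  | succ n ih => rw [pow_succ, Module.End.mul_eq_comp, ker_comp]; infer_instance

section Complemented

variable {R M : Type*} [Ring R] [AddCommGroup M] [Module R M] [TopologicalSpace M]
  [IsTopologicalAddGroup M]

theorem Submodule.IsTopCompl.closedComplemented_sup_of_le {p q r : Submodule R M}
    (h : IsTopCompl p r) (hq : q.ClosedComplemented) (hqr : q ≤ r) :
    (p ⊔ q).ClosedComplemented := by
  obtain ⟨g, hg⟩ := hq
  let π : M →L[R] M := p.projectionL r h + q.subtypeL ∘L g ∘L r.projectionL p h.symm
  have hπ_mem (x : M) : π x ∈ p ⊔ q :=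
    add_mem (mem_sup_left (projectionL_apply_mem h x)) (mem_sup_right (g _).2)
  refine ⟨π.codRestrict _ hπ_mem, fun ⟨x, hx⟩ => Subtype.ext ?_⟩
  obtain ⟨a, ha, b, hb, rfl⟩ := mem_sup.mp hx
  have hb' : b ∈ r := hqr hb
  have hrb : p.projectionL r h b = 0 := projectionL_apply_eq_zero_of_mem_right h hb'
  have hpa : r.projectionL p h.symm a = 0 := projectionL_apply_eq_zero_of_mem_right h.symm ha
  have hpb : r.projectionL p h.symm b = b := projectionL_apply_left h.symm ⟨b, hb'⟩
  simp [π, projectionL_apply_left h ⟨a, ha⟩, hrb, hpa, hpb, hg ⟨b, hb⟩]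

end Complemented

theorem Submodule.ClosedComplemented.sup_of_finiteDimensional {𝕜 E : Type*} [RCLike 𝕜]
    [NormedAddCommGroup E] [NormedSpace 𝕜 E] {p F : Submodule 𝕜 E} (hp : p.ClosedComplemented)
    [FiniteDimensional 𝕜 F] : (p ⊔ F).ClosedComplemented := by
  obtain ⟨r, h⟩ := hp.exists_isTopCompl
  let F' := F.map (r.projectionL p h.symm : E →ₗ[𝕜] E)
  have hF' : p ⊔ F = p ⊔ F' := by
    refine le_antisymm (sup_le le_sup_left fun x hx => ?_) (sup_le le_sup_left ?_)
    · rw [← projectionL_add_projectionL_eq_self h x]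
      exact add_mem (mem_sup_left (projectionL_apply_mem h x)) (mem_sup_right (mem_map_of_mem hx))
    · rintro _ ⟨x, hx, rfl⟩
      rw [ContinuousLinearMap.coe_coe, projectionL_eq_self_sub_projectionL h x]
      exact sub_mem (mem_sup_right hx) (mem_sup_left (projectionL_apply_mem h x))
  rw [hF']
  refine h.closedComplemented_sup_of_le (.of_finiteDimensional F') ?_
  rintro _ ⟨x, -, rfl⟩
  exact projectionL_apply_mem h.symm x

lemma disSet_nonempty {X : Type*} [NormedAddCommGroup X] [NormedSpace ℂ X] (T : X →L[ℂ] X)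
    [FiniteDimensional ℂ (ker (T : X →ₗ[ℂ] X))] : (disSet T).Nonempty := by
  have hanti : Antitone fun n => ker (T : X →ₗ[ℂ] X) ⊓ range ((T ^ n : X →L[ℂ] X) : X →ₗ[ℂ] X) :=
    fun n m h => inf_le_inf_left _ (by
      rw [ContinuousLinearMap.toLinearMap_pow, ContinuousLinearMap.toLinearMap_pow]
      exact (T : X →ₗ[ℂ] X).iterateRange.monotone h)
  have : FiniteDimensional ℂ ↥(ker (T : X →ₗ[ℂ] X) ⊓ range ((T ^ 0 : X →L[ℂ] X) : X →ₗ[ℂ] X)) :=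
    finiteDimensional_of_le inf_le_left
  obtain ⟨n, hn⟩ := Submodule.exists_forall_ge_eq_of_antitone hanti
  exact ⟨n, fun m hm => (hn m hm).ge⟩

theorem leftSemiFredholm_isQuasiFredholm_general
    (X : Type*) [NormedAddCommGroup X] [NormedSpace ℂ X]
    (T : X →L[ℂ] X) (hT : IsLeftSemiFredholm T) :
    IsQuasiFredholm T := by
  obtain ⟨-, hker, hrange⟩ := hT
  have hdis : (disSet T).Nonempty := disSet_nonempty T
  set d := sInf (disSet T)
  have : FiniteDimensional ℂ ↥(ker (T : X →ₗ[ℂ] X) ⊓ range ((T ^ d : X →L[ℂ] X) : X →ₗ[ℂ] X)) :=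
    finiteDimensional_of_le inf_le_left
  have : FiniteDimensional ℂ (ker ((T ^ d : X →L[ℂ] X) : X →ₗ[ℂ] X)) := by
    rw [ContinuousLinearMap.toLinearMap_pow]; exact finiteDimensional_ker_pow _ d
  have hsup := hrange.sup_of_finiteDimensional (F := ker ((T ^ d : X →L[ℂ] X) : X →ₗ[ℂ] X))
  exact ⟨d, isLeast_csInf hdis, closed_of_finiteDimensional _, .of_finiteDimensional _,
    hsup.isClosed, hsup⟩

/-- Every left semi-Fredholm operator is quasi-Fredholm. -/
theorem leftSemiFredholm_isQuasiFredholm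
    (X : Type*) [NormedAddCommGroup X] [NormedSpace ℂ X] [CompleteSpace X]
    (T : X →L[ℂ] X) (hT : IsLeftSemiFredholm T) :
    IsQuasiFredholm T :=
  leftSemiFredholm_isQuasiFredholm_general X T hT
end

section
/- Let X be a complex Banach space and let T ∈ L(X) be a quasi-Fredholm operator of degree d. Then R(T^{d+1}) is a closed subspace of X. -/
/-!
Kato's lemma: if `f` has closed range and `M ⊇ N(f)` is closed, then `f(M)` is closed, because a
surjection of Banach spaces is a quotient map. Applied to `(e, k) ↦ f e + k` it controls sums
`f(M) + L` once `R(f) + K` is closed.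

Stability of `N(T) ∩ R(T^m)` gives `N(T^{d+1}) ⊆ R(T^k) + N(T^d)`, so `T` maps the closed space
`R(T^k) + N(T^d)` onto `R(T^{k+1}) + N(T^d)` modulo `N(T^d)`, and closedness climbs from
`R(T) + N(T^d)` to `R(T^{d+1}) + N(T^d)`. The kernel is then removed one power at a time: the
intersection `N(T^{j+1}) ∩ (R(T^{d+1}) + N(T^j))` is the preimage under `T^j` of the closed space
`N(T) ∩ R(T^d)`, which lets closedness pass from `R(T^{d+1}) + N(T^{j+1})` to
`R(T^{d+1}) + N(T^j)`.
-/

open LinearMap (ker range)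

namespace ContinuousLinearMap

variable {𝕜 E F : Type*} [NontriviallyNormedField 𝕜]
  [NormedAddCommGroup E] [NormedSpace 𝕜 E] [CompleteSpace E]
  [NormedAddCommGroup F] [NormedSpace 𝕜 F] [CompleteSpace F]

theorem isClosed_map_of_isClosed_range (f : E →L[𝕜] F) {M : Submodule 𝕜 E}
    (hf : IsClosed (range (f : E →ₗ[𝕜] F) : Set F)) (hM : IsClosed (M : Set E))
    (hker : ker (f : E →ₗ[𝕜] F) ≤ M) :
    IsClosed (M.map (f : E →ₗ[𝕜] F) : Set F) := by
  have := hf.completeSpace_coe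
  set S : E →L[𝕜] range (f : E →ₗ[𝕜] F) :=
    f.codRestrict _ (LinearMap.mem_range_self (f : E →ₗ[𝕜] F))
  have hS : Function.Surjective S := by
    rintro ⟨_, x, rfl⟩
    exact ⟨x, rfl⟩
  have hsat : S ⁻¹' (S '' M) = M := by
    refine subset_antisymm ?_ (Set.subset_preimage_image _ _)
    rintro x ⟨y, hy, hxy⟩
    have hfxy : f x = f y := congrArg Subtype.val hxy.symm
    have : x - y ∈ M := hker (by simp [hfxy])
    simpa using M.add_mem this hy
  have hSM : IsClosed (S '' M) := by
    rwa [← (S.isQuotientMap hS).isClosed_preimage, hsat]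
  convert hf.isClosedEmbedding_subtypeVal.isClosedMap _ hSM using 1
  rw [Submodule.map_coe, ← Set.image_comp]
  rfl

theorem isClosed_map_sup_of_isClosed_range_sup (f : E →L[𝕜] F) {K L : Submodule 𝕜 F}
    {M : Submodule 𝕜 E} (hK : IsClosed (K : Set F))
    (hfK : IsClosed ((range (f : E →ₗ[𝕜] F) ⊔ K : Submodule 𝕜 F) : Set F))
    (hM : IsClosed (M : Set E)) (hL : IsClosed (L : Set F)) (hLK : L ≤ K)
    (hKM : K.comap (f : E →ₗ[𝕜] F) ≤ M)
    (hKL : K.comap (f : E →ₗ[𝕜] F) ≤ L.comap (f : E →ₗ[𝕜] F)) :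
    IsClosed ((M.map (f : E →ₗ[𝕜] F) ⊔ L : Submodule 𝕜 F) : Set F) := by
  have := hK.completeSpace_coe
  set g : E × K →L[𝕜] F := f.coprod K.subtypeL
  have hg : (g : E × K →ₗ[𝕜] F) = (f : E →ₗ[𝕜] F).coprod K.subtype := rfl
  have key := g.isClosed_map_of_isClosed_range (M := M.prod (L.comap K.subtype)) ?_ ?_ ?_
  · rwa [hg, LinearMap.map_coprod_prod, Submodule.map_comap_subtype, inf_eq_right.2 hLK] at key
  · rwa [hg, LinearMap.range_coprod, Submodule.range_subtype]
  · rw [Submodule.prod_coe]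
    exact hM.prod (hL.preimage continuous_subtype_val)
  · rintro ⟨e, k⟩ hek
    have hfe : f e = -k := eq_neg_of_add_eq_zero_left hek
    have he : e ∈ K.comap (f : E →ₗ[𝕜] F) := by simp [hfe]
    refine ⟨hKM he, ?_⟩
    simpa [hfe] using hKL he

theorem isClosed_range_sup_of_le (f : E →L[𝕜] F) {K K' : Submodule 𝕜 F} (hKK' : K ≤ K')
    (hK' : IsClosed (K' : Set F))
    (hfK' : IsClosed ((range (f : E →ₗ[𝕜] F) ⊔ K' : Submodule 𝕜 F) : Set F))
    (hL : IsClosed ((K' ⊓ (range (f : E →ₗ[𝕜] F) ⊔ K) : Submodule 𝕜 F) : Set F)) :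
    IsClosed ((range (f : E →ₗ[𝕜] F) ⊔ K : Submodule 𝕜 F) : Set F) := by
  have h := f.isClosed_map_sup_of_isClosed_range_sup hK' hfK' isClosed_univ hL inf_le_left
    le_top fun x hx ↦ ⟨hx, Submodule.mem_sup_left (LinearMap.mem_range_self _ x)⟩
  have hsup : range (f : E →ₗ[𝕜] F) ⊔ (K' ⊓ (range (f : E →ₗ[𝕜] F) ⊔ K)) =
      range (f : E →ₗ[𝕜] F) ⊔ K :=
    le_antisymm (sup_le le_sup_left inf_le_right)
      (sup_le_sup_left (le_inf hKK' le_sup_right) _)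
  rwa [Submodule.map_top, hsup] at h

end ContinuousLinearMap

namespace Module.End

variable {R M : Type*} [Ring R] [AddCommGroup M] [Module R M] (f : Module.End R M)

theorem comap_ker_pow (n : ℕ) : (ker (f ^ n)).comap f = ker (f ^ (n + 1)) := by
  rw [pow_succ, mul_eq_comp, LinearMap.ker_comp]

theorem range_pow_le_range_pow {m n : ℕ} (h : m ≤ n) : range (f ^ n) ≤ range (f ^ m) := by
  rw [← pow_mul_pow_sub f h, mul_eq_comp]
  exact LinearMap.range_comp_le_range _ _

theorem ker_pow_le_ker_pow {m n : ℕ} (h : m ≤ n) : ker (f ^ m) ≤ ker (f ^ n) := by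
  rw [← pow_sub_mul_pow f h, mul_eq_comp]
  exact LinearMap.ker_le_ker_comp _ _

theorem ker_pow_succ_le_range_pow_sup_ker_pow {d m : ℕ}
    (h : ker f ⊓ range (f ^ d) ≤ range (f ^ (d + m))) :
    ker (f ^ (d + 1)) ≤ range (f ^ m) ⊔ ker (f ^ d) := by
  intro x hx
  obtain ⟨y, hy⟩ := h ⟨by simpa [pow_succ'] using hx, LinearMap.mem_range_self _ x⟩
  rw [pow_add, mul_apply] at hy
  refine Submodule.mem_sup.2 ⟨(f ^ m) y, LinearMap.mem_range_self _ y, x - (f ^ m) y, ?_,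
    add_sub_cancel _ _⟩
  simp [hy]

theorem map_range_pow_sup_ker_pow_sup (k d : ℕ) :
    (range (f ^ k) ⊔ ker (f ^ d)).map f ⊔ ker (f ^ d) = range (f ^ (k + 1)) ⊔ ker (f ^ d) := by
  have hker : (ker (f ^ d)).map f ≤ ker (f ^ d) := by
    rw [Submodule.map_le_iff_le_comap, comap_ker_pow]
    exact ker_pow_le_ker_pow f d.le_succ
  rw [Submodule.map_sup, sup_assoc, sup_eq_right.2 hker, ← LinearMap.range_comp, ← mul_eq_comp,
    ← pow_succ']

theorem ker_pow_succ_inf_range_pow_sup_ker_pow (j k : ℕ) :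
    ker (f ^ (j + 1)) ⊓ (range (f ^ k) ⊔ ker (f ^ j)) =
      (ker f ⊓ range (f ^ (j + k))).comap (f ^ j) := by
  ext x
  simp only [Submodule.mem_inf, Submodule.mem_comap, Submodule.mem_sup, LinearMap.mem_ker,
    LinearMap.mem_range]
  constructor
  · rintro ⟨hx, _, ⟨z, rfl⟩, w, hw, rfl⟩
    refine ⟨by rwa [← mul_apply, ← pow_succ'], z, ?_⟩
    rw [map_add, hw, add_zero, pow_add, mul_apply]
  · rintro ⟨hx, z, hz⟩
    refine ⟨by rwa [pow_succ', mul_apply], _, ⟨z, rfl⟩, x - (f ^ k) z, ?_, add_sub_cancel _ _⟩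
    rw [map_sub, ← mul_apply, ← pow_add, hz, sub_self]

end Module.End

namespace ContinuousLinearMap

open Module.End

variable {𝕜 E : Type*} [NontriviallyNormedField 𝕜] [NormedAddCommGroup E] [NormedSpace 𝕜 E]
  (T : E →L[𝕜] E)

theorem isClosed_ker_toLinearMap_pow (n : ℕ) : IsClosed (ker ((T : E →ₗ[𝕜] E) ^ n) : Set E) := by
  rw [← toLinearMap_pow]
  exact (T ^ n).isClosed_ker

variable [CompleteSpace E] {d : ℕ}

theorem isClosed_range_pow_sup_ker_pow
    (hstab : ∀ m, d ≤ m → ker (T : E →ₗ[𝕜] E) ⊓ range ((T : E →ₗ[𝕜] E) ^ d) ≤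
      range ((T : E →ₗ[𝕜] E) ^ m))
    (hC : IsClosed ((range (T : E →ₗ[𝕜] E) ⊔ ker ((T : E →ₗ[𝕜] E) ^ d) : Submodule 𝕜 E) : Set E))
    (k : ℕ) :
    IsClosed ((range ((T : E →ₗ[𝕜] E) ^ (k + 1)) ⊔ ker ((T : E →ₗ[𝕜] E) ^ d) :
      Submodule 𝕜 E) : Set E) := by
  induction k with
  | zero => simpa using hC
  | succ k ih =>
    rw [← map_range_pow_sup_ker_pow_sup]
    refine T.isClosed_map_sup_of_isClosed_range_sup (T.isClosed_ker_toLinearMap_pow d) hC ih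
      (T.isClosed_ker_toLinearMap_pow d) le_rfl ?_ le_rfl
    rw [comap_ker_pow]
    exact ker_pow_succ_le_range_pow_sup_ker_pow _ (hstab _ (Nat.le_add_right _ _))

theorem isClosed_range_pow_succ_sup_ker_pow
    (hstab : ∀ m, d ≤ m → ker (T : E →ₗ[𝕜] E) ⊓ range ((T : E →ₗ[𝕜] E) ^ d) ≤
      range ((T : E →ₗ[𝕜] E) ^ m))
    (hM : IsClosed ((ker (T : E →ₗ[𝕜] E) ⊓ range ((T : E →ₗ[𝕜] E) ^ d) : Submodule 𝕜 E) : Set E))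
    (hC : IsClosed ((range (T : E →ₗ[𝕜] E) ⊔ ker ((T : E →ₗ[𝕜] E) ^ d) : Submodule 𝕜 E) : Set E))
    {j : ℕ} (hj : j ≤ d) :
    IsClosed ((range ((T : E →ₗ[𝕜] E) ^ (d + 1)) ⊔ ker ((T : E →ₗ[𝕜] E) ^ j) :
      Submodule 𝕜 E) : Set E) := by
  induction hj using Nat.decreasingInduction with
  | self => exact T.isClosed_range_pow_sup_ker_pow hstab hC d
  | of_succ j hj ih =>
    have hL : ker ((T : E →ₗ[𝕜] E) ^ (j + 1)) ⊓
        (range ((T : E →ₗ[𝕜] E) ^ (d + 1)) ⊔ ker ((T : E →ₗ[𝕜] E) ^ j)) =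
          (ker (T : E →ₗ[𝕜] E) ⊓ range ((T : E →ₗ[𝕜] E) ^ d)).comap ((T : E →ₗ[𝕜] E) ^ j) := by
      rw [ker_pow_succ_inf_range_pow_sup_ker_pow]
      congr 1
      exact le_antisymm (inf_le_inf_left _ (range_pow_le_range_pow _ (by omega)))
        (le_inf inf_le_left (hstab _ (by omega)))
    have key := (T ^ (d + 1)).isClosed_range_sup_of_le (ker_pow_le_ker_pow _ j.le_succ)
      (T.isClosed_ker_toLinearMap_pow _) (by rwa [toLinearMap_pow]) ?_
    · rwa [toLinearMap_pow] at key
    · rw [toLinearMap_pow, hL, Submodule.comap_coe, ← toLinearMap_pow, coe_coe]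
      exact hM.preimage (T ^ j).continuous

theorem isClosed_range_pow_succ
    (hstab : ∀ m, d ≤ m → ker (T : E →ₗ[𝕜] E) ⊓ range ((T : E →ₗ[𝕜] E) ^ d) ≤
      range ((T : E →ₗ[𝕜] E) ^ m))
    (hM : IsClosed ((ker (T : E →ₗ[𝕜] E) ⊓ range ((T : E →ₗ[𝕜] E) ^ d) : Submodule 𝕜 E) : Set E))
    (hC : IsClosed ((range (T : E →ₗ[𝕜] E) ⊔ ker ((T : E →ₗ[𝕜] E) ^ d) : Submodule 𝕜 E) : Set E)) :
    IsClosed (range ((T : E →ₗ[𝕜] E) ^ (d + 1)) : Set E) := by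
  simpa [one_eq_id] using T.isClosed_range_pow_succ_sup_ker_pow hstab hM hC (Nat.zero_le d)

end ContinuousLinearMap

/-- If `T` is quasi-Fredholm of degree `d`, then `R(T^{d+1})` is closed. -/
theorem range_pow_succ_closed_of_quasiFredholm
    (X : Type*) [NormedAddCommGroup X] [NormedSpace ℂ X] [CompleteSpace X]
    (T : X →L[ℂ] X) (d : ℕ) (hT : IsQuasiFredholmOfDegree T d) :
    IsClosed ((LinearMap.range ((T ^ (d + 1) : X →L[ℂ] X) : X →ₗ[ℂ] X) : Submodule ℂ X) : Set X) := by
  obtain ⟨⟨hstab, -⟩, hM, -, hC, -⟩ := hT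
  simp only [ContinuousLinearMap.toLinearMap_pow] at hM hC ⊢
  refine T.isClosed_range_pow_succ (fun m hm ↦ ?_) hM hC
  simpa only [ContinuousLinearMap.toLinearMap_pow] using (hstab m hm).trans inf_le_right
end
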